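/- Let d ≥ 1, let β_j > 0 and β'_j > 0 for j = 1,…,d, and let γ > 0 and γ' > 0. If γ' > (1/2) Σ_{j=1}^d 1/β'_j + (max_{1≤j≤d} β_j/β'_j) · γ, then ∫_{{λ ∈ ℝ^d : |λ| > 1}} (Σ_{j=1}^d |λ_j|^{β_j})^{2γ} / (Σ_{j=1}^d |λ_j|^{β'_j})^{2γ'} dλ < ∞. -/

import Mathlib

open MeasureTheory Filter Complex
open scoped BigOperators ENNReal NNReal

noncomputable section

abbrev Rd (d : ℕ) := EuclideanSpace ℝ (Fin d)
abbrev Cd (d : ℕ) := EuclideanSpace ℂ (Fin d)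

/-- Embedding of `ℝ^d` into `ℂ^d`. -/
def embedC {d : ℕ} (lam : Rd d) : Cd d := WithLp.toLp 2 (fun j => (lam j : ℂ))

/-- `e_t(λ) = exp(i⟨t,λ⟩) − 1`. -/
def eFun {d : ℕ} (t lam : Rd d) : ℂ :=
  Complex.exp (Complex.I * ((inner ℝ t lam : ℝ) : ℂ)) - 1

/-- The cube `Π_T = [−T,T]^d`. -/
def cube (d : ℕ) (T : ℝ) : Set (Rd d) := {t | ∀ j, |t j| ≤ T}

/-- `φ` is a (real) finite linear combination of the `e_t`, `t ∈ D`. -/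
def IsExpPolyOn {d : ℕ} (D : Set (Rd d)) (φ : Rd d → ℂ) : Prop :=
  ∃ (n : ℕ) (a : Fin n → ℝ) (t : Fin n → Rd d),
    (∀ k, t k ∈ D) ∧ ∀ lam, φ lam = ∑ k, (a k : ℂ) * eFun (t k) lam

/-- Entire extension of an exponential polynomial to `ℂ^d`. -/
def expPolyExt {d : ℕ} {n : ℕ} (a : Fin n → ℝ) (t : Fin n → Rd d) (z : Cd d) : ℂ :=
  ∑ k, (a k : ℂ) * (Complex.exp (Complex.I * ∑ j, (t k j : ℂ) * z j) - 1)

/-- `‖φ‖_f² = ∫ |φ(λ)|² f(λ) dλ`. -/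
def fNormSq {d : ℕ} (f : Rd d → ℝ) (φ : Rd d → ℂ) : ℝ :=
  ∫ lam, ‖φ lam‖ ^ 2 * f lam

def fNorm {d : ℕ} (f : Rd d → ℝ) (φ : Rd d → ℂ) : ℝ := Real.sqrt (fNormSq f φ)

/-- `⟨φ,ψ⟩_f = ∫ φ conj(ψ) f dλ`. -/
def fInner {d : ℕ} (f : Rd d → ℝ) (φ ψ : Rd d → ℂ) : ℂ :=
  ∫ lam, φ lam * (starRingEnd ℂ) (ψ lam) * ((f lam : ℝ) : ℂ)

def mNormSq {d : ℕ} (F : Measure (Rd d)) (φ : Rd d → ℂ) : ℝ :=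
  ∫ lam, ‖φ lam‖ ^ 2 ∂F

def mNorm {d : ℕ} (F : Measure (Rd d)) (φ : Rd d → ℂ) : ℝ := Real.sqrt (mNormSq F φ)

def mInner {d : ℕ} (F : Measure (Rd d)) (φ ψ : Rd d → ℂ) : ℂ :=
  ∫ lam, φ lam * (starRingEnd ℂ) (ψ lam) ∂F

/-- Condition (C1). -/
def CondC1 {d : ℕ} (f : Rd d → ℝ) : Prop :=
  ∃ c k η : ℝ, 0 < c ∧ 0 < k ∧ 0 < η ∧
    ∀ lam : Rd d, k < ‖lam‖ → c / ‖lam‖ ^ η ≤ f lam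

/-- Spectral integrability condition for a density. -/
def SpectralIntDensity {d : ℕ} (f : Rd d → ℝ) : Prop :=
  ∫⁻ lam : Rd d, ENNReal.ofReal (‖lam‖ ^ 2 / (1 + ‖lam‖ ^ 2) * f lam) < ⊤

/-- Spectral integrability condition for a measure. -/
def SpectralIntMeasure {d : ℕ} (F : Measure (Rd d)) : Prop :=
  ∫⁻ lam : Rd d, ENNReal.ofReal (‖lam‖ ^ 2 / (1 + ‖lam‖ ^ 2)) ∂F < ⊤

/-- Symmetry of a measure under `λ ↦ −λ`. -/
def SymmetricMeasure {d : ℕ} (F : Measure (Rd d)) : Prop :=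
  Measure.map (fun lam : Rd d => -lam) F = F

/-- The measure `f(λ)dλ`. -/
def densityMeasure {d : ℕ} (f : Rd d → ℝ) : Measure (Rd d) :=
  volume.withDensity fun lam => ENNReal.ofReal (f lam)

/-- `C_F(t,s)`, the (real) covariance associated to a spectral measure `F`. -/
def specCov {d : ℕ} (F : Measure (Rd d)) (t s : Rd d) : ℝ :=
  (∫ lam, eFun t lam * (starRingEnd ℂ) (eFun s lam) ∂F).re

/-- `μ` is the Gaussian measure with spectral measure `F` on `D`. -/
def IsGaussianOn {d : ℕ} (F : Measure (Rd d)) (D : Set (Rd d))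
    (μ : Measure (D → ℝ)) : Prop :=
  IsProbabilityMeasure μ ∧
  ∀ (n : ℕ) (t : Fin n → D) (a : Fin n → ℝ),
    ∫ x, Complex.exp (Complex.I * ∑ j, (a j : ℂ) * ((x (t j) : ℝ) : ℂ)) ∂μ =
      Complex.exp (-(1/2 : ℂ) *
        ∑ j, ∑ k, (a j : ℂ) * (a k : ℂ) * ((specCov F (t j) (t k) : ℝ) : ℂ))

/-- Mutual absolute continuity. -/
def MeasEquiv {α : Type*} [MeasurableSpace α] (μ ν : Measure α) : Prop :=
  μ ≪ ν ∧ ν ≪ μ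

/-- Membership in `L_{Π_T}(f)`: an `L²(f dλ)`-limit of exponential polynomials over `Π_T`. -/
def MemLspan {d : ℕ} (T : ℝ) (f : Rd d → ℝ) (g : Rd d → ℂ) : Prop :=
  ∃ φ : ℕ → (Rd d → ℂ), (∀ m, IsExpPolyOn (cube d T) (φ m)) ∧
    Tendsto (fun m => fNormSq f fun lam => φ m lam - g lam) atTop (nhds 0)

/-- A reproducing kernel for `L_{Π_T}(f)`. -/
def IsReprKernel {d : ℕ} (T : ℝ) (f : Rd d → ℝ) (K : Rd d → Rd d → ℂ) : Prop :=
  (∀ ω, MemLspan T f (K ω)) ∧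
  ∀ t ∈ cube d T, ∀ ω : Rd d, fInner f (eFun t) (K ω) = eFun t ω

/-- A finite linear combination of tensors `(ω,λ) ↦ e_t(ω) conj(e_s(λ))`, `t, s ∈ D`. -/
def IsTensorExpPoly {d : ℕ} (D : Set (Rd d)) (ψ : Rd d × Rd d → ℂ) : Prop :=
  ∃ (n : ℕ) (b : Fin n → ℂ) (t s : Fin n → Rd d),
    (∀ k, t k ∈ D ∧ s k ∈ D) ∧
    ∀ p : Rd d × Rd d, ψ p = ∑ k, b k * eFun (t k) p.1 * (starRingEnd ℂ) (eFun (s k) p.2)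

/-- Membership in the closure in `L²(F ⊗ F)` of the span of tensor exponential polynomials. -/
def MemTensorSpan {d : ℕ} (D : Set (Rd d)) (F : Measure (Rd d))
    (ψ : Rd d × Rd d → ℂ) : Prop :=
  ∃ Ψ : ℕ → (Rd d × Rd d → ℂ), (∀ m, IsTensorExpPoly D (Ψ m)) ∧
    Tendsto (fun m => ∫ p, ‖Ψ m p - ψ p‖ ^ 2 ∂(F.prod F)) atTop (nhds 0)

/-- Finite exponential type. -/
def FiniteExpType {d : ℕ} (Φ : Cd d → ℂ) : Prop :=
  ∃ C M : ℝ, 0 < C ∧ 0 < M ∧ ∀ z : Cd d, ‖Φ z‖ ≤ C * Real.exp (M * ‖z‖)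

/-- Condition (C2). -/
def CondC2 {d : ℕ} (f : Rd d → ℝ) : Prop :=
  ∃ Φ : Cd d → ℂ, Differentiable ℂ Φ ∧ FiniteExpType Φ ∧
    ∃ c₁ c₂ R : ℝ, 0 < c₁ ∧ c₁ ≤ c₂ ∧ 0 < R ∧
      ∀ lam : Rd d, R ≤ ‖lam‖ →
        c₁ * f lam ≤ ‖Φ (embedC lam)‖ ^ 2 ∧
        ‖Φ (embedC lam)‖ ^ 2 ≤ c₂ * f lam


/-!
Put `M = max_j β_j / β'_j` and `B = ∑_j |λ_j|^{β'_j}`. Each `|λ_j|^{β_j}` is at most `(1 + B)^M`,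
and `B` is bounded below on `|λ| > 1`, so the integrand is `O((1 + B)^{-r})` with
`r = 2γ' - 2Mγ > ∑_j 1/β'_j`. Splitting `r = ∑_j p_j` with `β'_j p_j > 1` and using
`1 + B ≥ 1 + |λ_j|^{β'_j}` bounds `(1 + B)^{-r}` by `∏_j (1 + |λ_j|^{β'_j})^{-p_j}`,
a product of integrable functions of one variable.
-/

lemma Real.add_rpow_le_two_rpow_mul_rpow_add_rpow {a b p : ℝ} (ha : 0 ≤ a) (hb : 0 ≤ b)
    (hp : 0 ≤ p) : (a + b) ^ p ≤ 2 ^ p * (a ^ p + b ^ p) := calc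
  (a + b) ^ p ≤ (2 * max a b) ^ p := by
    gcongr; linarith [le_max_left a b, le_max_right a b]
  _ = 2 ^ p * max (a ^ p) (b ^ p) := by
    rw [Real.mul_rpow zero_le_two (le_max_of_le_left ha), Real.rpow_max ha hb hp]
  _ ≤ 2 ^ p * (a ^ p + b ^ p) := by
    gcongr; exact max_le_add_of_nonneg (by positivity) (by positivity)

lemma rpow_le_one_add_rpow_rpow {a b b' M : ℝ} (ha : 0 ≤ a) (hb : 0 ≤ b) (hM : 0 ≤ M)
    (hbM : b ≤ M * b') : a ^ b ≤ (1 + a ^ b') ^ M := by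
  have hab' : 0 ≤ a ^ b' := Real.rpow_nonneg ha b'
  rcases le_or_gt a 1 with ha1 | ha1
  · exact (Real.rpow_le_one ha ha1 hb).trans (Real.one_le_rpow (by linarith) hM)
  · calc a ^ b ≤ a ^ (b' * M) := Real.rpow_le_rpow_of_exponent_le ha1.le (by linarith)
      _ = (a ^ b') ^ M := Real.rpow_mul ha b' M
      _ ≤ (1 + a ^ b') ^ M := by gcongr; linarith

lemma sum_rpow_le_card_mul_one_add_sum_rpow_rpow {ι : Type*} [Fintype ι] {a b b' : ι → ℝ}
    {M : ℝ} (ha : ∀ i, 0 ≤ a i) (hb : ∀ i, 0 ≤ b i) (hM : 0 ≤ M)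
    (hbM : ∀ i, b i ≤ M * b' i) :
    ∑ i, a i ^ b i ≤ Fintype.card ι * (1 + ∑ i, a i ^ b' i) ^ M := by
  refine (Finset.sum_le_card_nsmul _ _ ((1 + ∑ i, a i ^ b' i) ^ M) fun i _ => ?_).trans_eq
    (by simp [nsmul_eq_mul])
  calc a i ^ b i ≤ (1 + a i ^ b' i) ^ M := rpow_le_one_add_rpow_rpow (ha i) (hb i) hM (hbM i)
    _ ≤ (1 + ∑ i, a i ^ b' i) ^ M := by
        gcongr
        · exact add_nonneg zero_le_one (Real.rpow_nonneg (ha i) _)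
        · exact Finset.single_le_sum (fun j _ => Real.rpow_nonneg (ha j) (b' j))
            (Finset.mem_univ i)

lemma rpow_div_rpow_le_mul_one_add_rpow {N B n c M s t : ℝ} (hN : 0 ≤ N)
    (hNB : N ≤ n * (1 + B) ^ M) (hc : 0 < c) (hcB : c ≤ B) (hs : 0 ≤ s) (ht : 0 ≤ t) :
    N ^ s / B ^ t ≤ n ^ s * (1 + 1 / c) ^ t * (1 + B) ^ (M * s - t) := by
  have hB : 0 < B := hc.trans_le hcB
  have hn : 0 ≤ n := nonneg_of_mul_nonneg_left (hN.trans hNB) (by positivity)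
  have hnum : N ^ s ≤ n ^ s * (1 + B) ^ (M * s) := calc
    N ^ s ≤ (n * (1 + B) ^ M) ^ s := by gcongr
    _ = n ^ s * (1 + B) ^ (M * s) := by
        rw [Real.mul_rpow hn (by positivity), ← Real.rpow_mul (by positivity)]
  have hden : (1 + B) ^ t ≤ (1 + 1 / c) ^ t * B ^ t := by
    rw [← Real.mul_rpow (by positivity) hB.le]
    gcongr
    have : 1 ≤ B / c := (one_le_div hc).2 hcB
    linarith [show (1 + 1 / c) * B = B + B / c by ring]
  calc N ^ s / B ^ t ≤ n ^ s * (1 + B) ^ (M * s) * (1 / B ^ t) := by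
        rw [← div_eq_mul_one_div]; gcongr
    _ ≤ n ^ s * (1 + B) ^ (M * s) * ((1 + 1 / c) ^ t / (1 + B) ^ t) := by
        refine mul_le_mul_of_nonneg_left ?_ (by positivity)
        rw [div_le_div_iff₀ (by positivity) (by positivity), one_mul]
        exact hden
    _ = n ^ s * (1 + 1 / c) ^ t * (1 + B) ^ (M * s - t) := by
        rw [Real.rpow_sub (by positivity)]; ring

lemma rpow_neg_sum_le_prod_rpow_neg {ι : Type*} (s : Finset ι) {x p : ι → ℝ} {y : ℝ}
    (hx : ∀ i ∈ s, 0 < x i) (hxy : ∀ i ∈ s, x i ≤ y) (hp : ∀ i ∈ s, 0 ≤ p i) :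
    y ^ (-∑ i ∈ s, p i) ≤ ∏ i ∈ s, x i ^ (-p i) := by
  rcases s.eq_empty_or_nonempty with rfl | ⟨i, hi⟩
  · simp
  have hy : 0 < y := (hx i hi).trans_le (hxy i hi)
  rw [← Finset.sum_neg_distrib, Real.rpow_sum_of_pos hy]
  exact Finset.prod_le_prod (fun i _ => by positivity) fun i hi =>
    Real.rpow_le_rpow_of_nonpos (hx i hi) (hxy i hi) (neg_nonpos.2 (hp i hi))

lemma sum_rpow_rpow_div_sum_rpow_rpow_le {ι : Type*} [Fintype ι] {a b b' p : ι → ℝ}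
    {M s t c : ℝ} (ha : ∀ i, 0 ≤ a i) (hb : ∀ i, 0 ≤ b i) (hM : 0 ≤ M)
    (hbM : ∀ i, b i ≤ M * b' i) (hs : 0 ≤ s) (ht : 0 ≤ t) (hp : ∀ i, 0 ≤ p i)
    (hpsum : ∑ i, p i = t - M * s) (hc : 0 < c) (hcB : c ≤ ∑ i, a i ^ b' i) :
    (∑ i, a i ^ b i) ^ s / (∑ i, a i ^ b' i) ^ t ≤
      Fintype.card ι ^ s * (1 + 1 / c) ^ t * ∏ i, (1 + a i ^ b' i) ^ (-p i) := by
  set B := ∑ i, a i ^ b' i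
  have hterm : ∀ i, a i ^ b' i ≤ B := fun i =>
    Finset.single_le_sum (fun j _ => Real.rpow_nonneg (ha j) (b' j)) (Finset.mem_univ i)
  calc _ ≤ Fintype.card ι ^ s * (1 + 1 / c) ^ t * (1 + B) ^ (M * s - t) :=
        rpow_div_rpow_le_mul_one_add_rpow
          (Finset.sum_nonneg fun i _ => Real.rpow_nonneg (ha i) (b i))
          (sum_rpow_le_card_mul_one_add_sum_rpow_rpow ha hb hM hbM) hc hcB hs ht
    _ = Fintype.card ι ^ s * (1 + 1 / c) ^ t * (1 + B) ^ (-∑ i, p i) := by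
        rw [hpsum, neg_sub]
    _ ≤ _ := by
        refine mul_le_mul_of_nonneg_left (rpow_neg_sum_le_prod_rpow_neg _ (fun i _ => ?_)
          (fun i _ => by linarith [hterm i]) (fun i _ => hp i)) (by positivity)
        linarith [Real.rpow_nonneg (ha i) (b' i)]

lemma exists_pos_sum_eq_one_lt_mul {ι : Type*} [Fintype ι] [Nonempty ι] {b : ι → ℝ}
    (hb : ∀ i, 0 < b i) {r : ℝ} (hr : ∑ i, 1 / b i < r) :
    ∃ p : ι → ℝ, (∀ i, 0 < p i) ∧ (∀ i, 1 < b i * p i) ∧ ∑ i, p i = r := by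
  set S := ∑ i, 1 / b i
  have hS : 0 < S := Finset.sum_pos (fun i _ => one_div_pos.2 (hb i)) Finset.univ_nonempty
  have hθ : 1 < r / S := (one_lt_div hS).2 hr
  refine ⟨fun i => r / S * (1 / b i), fun i => by have := hb i; positivity, fun i => ?_, ?_⟩
  · show 1 < b i * (r / S * (1 / b i))
    rwa [mul_comm, mul_assoc, one_div_mul_cancel (hb i).ne', mul_one]
  · rw [← Finset.mul_sum, div_mul_cancel₀ _ hS.ne']

lemma EuclideanSpace.exists_inv_sqrt_card_le_abs {ι : Type*} [Fintype ι]
    {x : EuclideanSpace ℝ ι} (hx : 1 < ‖x‖) : ∃ i, (√(Fintype.card ι))⁻¹ ≤ |x i| := by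
  by_contra! h
  have : ‖x‖ ^ 2 ≤ 1 := calc
    ‖x‖ ^ 2 = ∑ i, |x i| ^ 2 := by simp [EuclideanSpace.norm_sq_eq]
    _ ≤ Fintype.card ι • (√(Fintype.card ι))⁻¹ ^ 2 :=
        Finset.sum_le_card_nsmul _ _ _ fun i _ => by gcongr; exact (h i).le
    _ ≤ 1 := by
        rw [nsmul_eq_mul, inv_pow, Real.sq_sqrt (Nat.cast_nonneg _)]
        exact mul_inv_le_one
  nlinarith

lemma EuclideanSpace.exists_pos_le_sum_abs_rpow {ι : Type*} [Fintype ι] [Nonempty ι]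
    {b : ι → ℝ} (hb : ∀ i, 0 ≤ b i) :
    ∃ c > 0, ∀ x : EuclideanSpace ℝ ι, 1 < ‖x‖ → c ≤ ∑ i, |x i| ^ b i := by
  set ρ := (√(Fintype.card ι))⁻¹
  have hρ0 : 0 < ρ := by simp [ρ, Fintype.card_pos]
  have hρ : ρ ≤ 1 :=
    inv_le_one_of_one_le₀ (Real.one_le_sqrt.2 (by exact_mod_cast Fintype.card_pos))
  refine ⟨ρ ^ ∑ i, b i, by positivity, fun x hx => ?_⟩
  obtain ⟨i, hi⟩ := exists_inv_sqrt_card_le_abs hx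
  calc ρ ^ ∑ i, b i ≤ ρ ^ b i :=
        Real.rpow_le_rpow_of_exponent_ge hρ0 hρ
          (Finset.single_le_sum (fun j _ => hb j) (Finset.mem_univ i))
    _ ≤ |x i| ^ b i := Real.rpow_le_rpow hρ0.le hi (hb i)
    _ ≤ ∑ i, |x i| ^ b i :=
        Finset.single_le_sum (fun j _ => Real.rpow_nonneg (abs_nonneg (x j)) (b j))
          (Finset.mem_univ i)

lemma integrable_one_add_abs_rpow_rpow_neg {b p : ℝ} (hb : 0 < b) (hbp : 1 < b * p) :
    Integrable fun x : ℝ => (1 + |x| ^ b) ^ (-p) := by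
  have hp : 0 < p := pos_of_mul_pos_right (one_pos.trans hbp) hb.le
  have hbase : Continuous fun x : ℝ => 1 + |x| ^ b :=
    continuous_const.add (continuous_abs.rpow_const fun _ => Or.inr hb.le)
  have hcont : Continuous fun x : ℝ => (1 + |x| ^ b) ^ (-p) :=
    hbase.rpow_const fun x => Or.inl (by positivity)
  refine ((integrable_one_add_norm (E := ℝ) (μ := volume) (r := b * p)
    (by simpa using hbp)).const_mul (2 ^ (b * p))).mono' hcont.aestronglyMeasurable
    (.of_forall fun x => ?_)
  have hcomp : (1 + |x|) ^ b ≤ 2 ^ b * (1 + |x| ^ b) := by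
    simpa using Real.add_rpow_le_two_rpow_mul_rpow_add_rpow zero_le_one (abs_nonneg x) hb.le
  rw [Real.norm_of_nonneg (by positivity), Real.norm_eq_abs]
  calc (1 + |x| ^ b) ^ (-p) = (2 ^ b) ^ p * (2 ^ b * (1 + |x| ^ b)) ^ (-p) := by
        rw [Real.mul_rpow (by positivity) (by positivity), ← mul_assoc,
          ← Real.rpow_add (by positivity), add_neg_cancel, Real.rpow_zero, one_mul]
    _ ≤ (2 ^ b) ^ p * ((1 + |x|) ^ b) ^ (-p) :=
        mul_le_mul_of_nonneg_left
          (Real.rpow_le_rpow_of_nonpos (by positivity) hcomp (by linarith)) (by positivity)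
    _ = 2 ^ (b * p) * (1 + |x|) ^ (-(b * p)) := by
        rw [← Real.rpow_mul zero_le_two, ← Real.rpow_mul (by positivity), mul_neg]

lemma EuclideanSpace.integrable_prod_apply {ι : Type*} [Fintype ι] {f : ι → ℝ → ℝ}
    (hf : ∀ i, Integrable (f i)) :
    Integrable fun x : EuclideanSpace ℝ ι => ∏ i, f i (x i) :=
  (PiLp.volume_preserving_ofLp ι).integrable_comp_of_integrable (Integrable.fintype_prod hf)

theorem stmt_13 (d : ℕ) (hd : 1 ≤ d) (β β' : Fin d → ℝ)
    (hβ : ∀ j, 0 < β j) (hβ' : ∀ j, 0 < β' j)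
    (γ γ' : ℝ) (hγ : 0 < γ) (hγ' : 0 < γ')
    (hcond : (1 / 2) * (∑ j, 1 / β' j) + (⨆ j, β j / β' j) * γ < γ') :
    ∫⁻ lam in {lam : Rd d | 1 < ‖lam‖},
      ENNReal.ofReal
        ((∑ j, |lam j| ^ β j) ^ (2 * γ) / (∑ j, |lam j| ^ β' j) ^ (2 * γ')) < ⊤ := by
  have : Nonempty (Fin d) := ⟨⟨0, hd⟩⟩
  set M := ⨆ j, β j / β' j
  have hM : 0 ≤ M := Real.iSup_nonneg fun j => (div_pos (hβ j) (hβ' j)).le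
  have hβM : ∀ j, β j ≤ M * β' j := fun j =>
    (div_le_iff₀ (hβ' j)).1 (le_ciSup (Set.finite_range fun j => β j / β' j).bddAbove j)
  obtain ⟨p, hp0, hpβ', hp⟩ := exists_pos_sum_eq_one_lt_mul hβ' (r := 2 * γ' - M * (2 * γ))
    (by linarith)
  obtain ⟨c, hc, hcB⟩ := EuclideanSpace.exists_pos_le_sum_abs_rpow fun j => (hβ' j).le
  set K := (d : ℝ) ^ (2 * γ) * (1 + 1 / c) ^ (2 * γ')
  have hint : Integrable fun lam : Rd d => K * ∏ j, (1 + |lam j| ^ β' j) ^ (-p j) :=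
    (EuclideanSpace.integrable_prod_apply fun j =>
      integrable_one_add_abs_rpow_rpow_neg (hβ' j) (hpβ' j)).const_mul K
  refine lt_of_le_of_lt ?_ hint.lintegral_lt_top
  refine (setLIntegral_mono' (measurableSet_lt measurable_const measurable_norm) fun lam hlam =>
    ENNReal.ofReal_le_ofReal ?_).trans (setLIntegral_le_lintegral _ _)
  simpa [K] using sum_rpow_rpow_div_sum_rpow_rpow_le (a := fun j => |lam j|)
    (fun j => abs_nonneg _) (fun j => (hβ j).le) hM hβM (by positivity) (by positivity)
    (fun j => (hp0 j).le) hp hc (hcB lam hlam)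

end
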